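/- The piecewise linear map F^∞ : ℝ² → ℝ² given by F^∞(α_0, α_1) = (min(α_0, 2α_0+α_1), min(α_1, α_0+2α_1)) is bijective. -/

import Mathlib

/-!
On the half-plane `α₀ + α₁ ≥ 0` the map is the identity, and on `α₀ + α₁ ≤ 0` it is the linear
map `(α₀, α₁) ↦ (2α₀ + α₁, α₀ + 2α₁)`, which multiplies `α₀ + α₁` by `3`. Both pieces therefore
map their half-plane bijectively onto itself, and the inverse is glued from the identity and the
inverse matrix `(1/3) [[2, -1], [-1, 2]]`.
-/

namespace RecessionMap

variable {K : Type*} [Field K] [LinearOrder K] [IsStrictOrderedRing K]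

def toFun (α : K × K) : K × K :=
  (min α.1 (2 * α.1 + α.2), min α.2 (α.1 + 2 * α.2))

def invFun (β : K × K) : K × K :=
  if 0 ≤ β.1 + β.2 then β else ((2 * β.1 - β.2) / 3, (2 * β.2 - β.1) / 3)

theorem toFun_of_nonneg {α : K × K} (h : 0 ≤ α.1 + α.2) : toFun α = α := by
  ext
  · exact min_eq_left (by linarith)
  · exact min_eq_left (by linarith)

theorem toFun_of_nonpos {α : K × K} (h : α.1 + α.2 ≤ 0) :
    toFun α = (2 * α.1 + α.2, α.1 + 2 * α.2) := by
  ext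
  · exact min_eq_right (by linarith)
  · exact min_eq_right (by linarith)

theorem leftInverse_invFun : Function.LeftInverse invFun (toFun : K × K → K × K) := by
  intro α
  rcases le_total 0 (α.1 + α.2) with h | h
  · rw [toFun_of_nonneg h, invFun, if_pos h]
  · rw [toFun_of_nonpos h, invFun]
    split_ifs with h'
    · ext <;> dsimp only <;> linarith
    · ext <;> dsimp only <;> ring

theorem rightInverse_invFun : Function.RightInverse invFun (toFun : K × K → K × K) := by
  intro β
  by_cases h : 0 ≤ β.1 + β.2
  · rw [invFun, if_pos h, toFun_of_nonneg h]
  · have hsum : (2 * β.1 - β.2) / 3 + (2 * β.2 - β.1) / 3 ≤ 0 := by linarith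
    rw [invFun, if_neg h, toFun_of_nonpos hsum]
    ext <;> dsimp only <;> ring

theorem bijective_toFun : Function.Bijective (toFun : K × K → K × K) :=
  ⟨leftInverse_invFun.injective, rightInverse_invFun.surjective⟩

end RecessionMap

theorem stmt9 :
    Function.Bijective (fun α : ℝ × ℝ =>
      (min α.1 (2 * α.1 + α.2), min α.2 (α.1 + 2 * α.2))) :=
  RecessionMap.bijective_toFun
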